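/- Let m be a positive integer. There exists a constant C > 1 depending only on m such that for all p ∈ (0, m), α ∈ (0, p) and ℓ ≥ 1, one has ∫_{w ∈ ℝ^m, |z−w| ≤ ℓ} |w|^(−p) dw ≤ (C/(m−p)) ℓ^(m−p+α) ⟨z⟩^(−α) for all z ∈ ℝ^m. -/

import Mathlib

/-!
Write `d` for the dimension and `V` for the volume of the unit ball. If `‖z‖ ≤ 2ℓ`, the ball
`closedBall z ℓ` lies in `closedBall 0 (3ℓ)`, where polar coordinates give
`∫ ‖w‖^(-p) = d V (3ℓ)^(d-p) / (d-p)`, and `⟨z⟩ ≤ √5 ℓ` pays for the extra factor `ℓ^α ⟨z⟩^(-α)`.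
If `‖z‖ > 2ℓ`, the integrand is at most `(‖z‖/2)^(-p)` on a ball of volume `V ℓ^d`, and
`ℓ^(p-α) ≤ ‖z‖^(p-α)` converts the surplus power of `ℓ` into the decay `‖z‖^(-α) ≤ √2^α ⟨z⟩^(-α)`.
-/

open MeasureTheory Set Metric Module

theorem rpow_le_pow_of_exponent_le {b x : ℝ} {n : ℕ} (hb : 1 ≤ b) (hx : x ≤ n) :
    b ^ x ≤ b ^ n := by
  simpa using Real.rpow_le_rpow_of_exponent_le hb hx

theorem rpow_neg_le_one_add_sq_rpow_neg {t c x α : ℝ} (hc : 0 ≤ c) (hx : 0 < x) (hα : 0 ≤ α)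
    (h : 1 + t ^ 2 ≤ c * x ^ 2) :
    c ^ (-α / 2) * x ^ (-α) ≤ (1 + t ^ 2) ^ (-α / 2) := by
  have hsq : (x ^ 2) ^ (-α / 2) = x ^ (-α) := by
    rw [← Real.rpow_natCast, ← Real.rpow_mul hx.le]
    ring_nf
  rw [← hsq, ← Real.mul_rpow hc (by positivity)]
  exact Real.rpow_le_rpow_of_nonpos (by positivity) h (by linarith)

variable {E : Type*} [NormedAddCommGroup E] [NormedSpace ℝ E] [FiniteDimensional ℝ E]
  [MeasurableSpace E] [BorelSpace E] (μ : Measure E) [μ.IsAddHaarMeasure]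

theorem setIntegral_closedBall_norm_rpow_neg [Nontrivial E] {p R : ℝ}
    (hp : p < finrank ℝ E) (hR : 0 ≤ R) :
    ∫ x in closedBall (0 : E) R, ‖x‖ ^ (-p) ∂μ
      = finrank ℝ E * μ.real (ball 0 1) * (R ^ (finrank ℝ E - p) / (finrank ℝ E - p)) := by
  set d := finrank ℝ E
  have hradial : ∫ y in Ioi (0 : ℝ), y ^ (d - 1) • (Iic R).indicator (· ^ (-p)) y
      = R ^ ((d : ℝ) - p) / (d - p) := by
    have hd : 1 ≤ d := finrank_pos
    calc ∫ y in Ioi (0 : ℝ), y ^ (d - 1) • (Iic R).indicator (· ^ (-p)) y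
        = ∫ y in Ioc 0 R, y ^ ((d : ℝ) - 1 - p) := by
          rw [← Ioi_inter_Iic, ← setIntegral_indicator measurableSet_Iic]
          refine setIntegral_congr_fun measurableSet_Ioi fun y (hy : 0 < y) => ?_
          by_cases hyR : y ∈ Iic R
          · simp only [indicator_of_mem hyR, smul_eq_mul]
            rw [← Real.rpow_natCast, ← Real.rpow_add hy, Nat.cast_sub hd]
            ring_nf
          · simp [indicator_of_notMem hyR]
      _ = R ^ ((d : ℝ) - p) / (d - p) := by
          rw [← intervalIntegral.integral_of_le hR, integral_rpow (Or.inl (by linarith)),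
            Real.zero_rpow (by linarith)]
          ring_nf
  have hindicator : (closedBall (0 : E) R).indicator (fun x => ‖x‖ ^ (-p))
      = fun x => (Iic R).indicator (· ^ (-p)) ‖x‖ := by
    ext x
    by_cases hx : ‖x‖ ≤ R <;> simp [indicator, hx]
  rw [← integral_indicator measurableSet_closedBall, hindicator,
    integral_fun_norm_addHaar μ, hradial, nsmul_eq_mul, smul_eq_mul, mul_assoc]

theorem locallyIntegrable_norm_rpow_neg [Nontrivial E] {p : ℝ} (hp : p < finrank ℝ E) :
    LocallyIntegrable (fun x : E => ‖x‖ ^ (-p)) μ :=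
  locallyIntegrable_of_norm_le_rpow (C := 1) finrank_pos hp
    (.of_forall fun x => by simp [abs_of_nonneg (Real.rpow_nonneg (norm_nonneg x) _)])
    (measurable_norm.pow_const _).aestronglyMeasurable

theorem setIntegral_closedBall_norm_rpow_neg_le [Nontrivial E] {p ℓ : ℝ}
    (hp : p < finrank ℝ E) (hℓ : 0 ≤ ℓ) (z : E) :
    ∫ x in closedBall z ℓ, ‖x‖ ^ (-p) ∂μ
      ≤ finrank ℝ E * μ.real (ball 0 1)
          * ((‖z‖ + ℓ) ^ (finrank ℝ E - p) / (finrank ℝ E - p)) := by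
  have hsub : closedBall z ℓ ⊆ closedBall 0 (‖z‖ + ℓ) :=
    closedBall_subset_closedBall' (by rw [dist_zero_right, add_comm])
  rw [← setIntegral_closedBall_norm_rpow_neg μ hp (by positivity)]
  exact setIntegral_mono_set
    ((locallyIntegrable_norm_rpow_neg μ hp).integrableOn_isCompact (isCompact_closedBall _ _))
    (.of_forall fun x => Real.rpow_nonneg (norm_nonneg x) _) hsub.eventuallyLE

theorem setIntegral_closedBall_norm_rpow_neg_le_of_lt_norm {p ℓ : ℝ} {z : E}
    (hp : 0 ≤ p) (hℓ : 0 ≤ ℓ) (hz : ℓ < ‖z‖) :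
    ∫ x in closedBall z ℓ, ‖x‖ ^ (-p) ∂μ
      ≤ (‖z‖ - ℓ) ^ (-p) * (ℓ ^ finrank ℝ E * μ.real (ball 0 1)) := by
  rw [← Measure.addHaar_real_closedBall μ z hℓ]
  refine (Real.le_norm_self _).trans
    (norm_setIntegral_le_of_norm_le_const measure_closedBall_lt_top fun x hx => ?_)
  have hdist : ‖z‖ - ℓ ≤ ‖x‖ := by
    have := norm_sub_norm_le z x
    rw [norm_sub_rev, ← dist_eq_norm] at this
    linarith [mem_closedBall.1 hx]
  rw [Real.norm_of_nonneg (Real.rpow_nonneg (norm_nonneg x) _)]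
  exact Real.rpow_le_rpow_of_nonpos (by linarith) hdist (by linarith)

theorem setIntegral_closedBall_norm_rpow_neg_le_of_norm_le_two_mul [Nontrivial E]
    {p α ℓ : ℝ} {z : E} (hp0 : 0 ≤ p) (hp : p < finrank ℝ E) (hα0 : 0 ≤ α)
    (hα : α ≤ 2 * finrank ℝ E) (hℓ : 1 ≤ ℓ) (hz : ‖z‖ ≤ 2 * ℓ) :
    ∫ x in closedBall z ℓ, ‖x‖ ^ (-p) ∂μ
      ≤ finrank ℝ E * μ.real (ball 0 1) * 15 ^ finrank ℝ E / (finrank ℝ E - p)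
          * ℓ ^ ((finrank ℝ E : ℝ) - p + α) * (1 + ‖z‖ ^ 2) ^ (-α / 2) := by
  set d := finrank ℝ E
  set V := μ.real (ball 0 1)
  set s := (d : ℝ) - p
  have hs : 0 < s := by linarith
  have hℓ0 : 0 < ℓ := by linarith
  have hbracket := rpow_neg_le_one_add_sq_rpow_neg (t := ‖z‖) (c := 5) (by norm_num) hℓ0 hα0
    (by nlinarith [norm_nonneg z])
  have hconst : d * V * 3 ^ s * 5 ^ (α / 2) ≤ d * V * 15 ^ d := by
    have h3 : (3 : ℝ) ^ s ≤ 3 ^ d := rpow_le_pow_of_exponent_le (by norm_num) (by linarith)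
    have h5 : (5 : ℝ) ^ (α / 2) ≤ 5 ^ d := rpow_le_pow_of_exponent_le (by norm_num) (by linarith)
    calc d * V * 3 ^ s * 5 ^ (α / 2) ≤ d * V * 3 ^ d * 5 ^ d := by gcongr
      _ = d * V * 15 ^ d := by rw [mul_assoc _ ((3 : ℝ) ^ d), ← mul_pow]; norm_num
  calc _ ≤ d * V * ((‖z‖ + ℓ) ^ s / s) :=
        setIntegral_closedBall_norm_rpow_neg_le μ hp hℓ0.le z
    _ ≤ d * V * ((3 * ℓ) ^ s / s) := by gcongr; linarith
    _ = d * V * 3 ^ s * 5 ^ (α / 2) / s * ℓ ^ (s + α) * (5 ^ (-α / 2) * ℓ ^ (-α)) := by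
      rw [Real.mul_rpow (by norm_num) hℓ0.le, Real.rpow_add hℓ0, Real.rpow_neg hℓ0.le,
        neg_div, Real.rpow_neg (by norm_num)]
      field_simp
    _ ≤ _ := by gcongr

theorem setIntegral_closedBall_norm_rpow_neg_le_of_two_mul_lt_norm
    {p α ℓ : ℝ} {z : E} (hp : p < finrank ℝ E) (hα0 : 0 ≤ α) (hαp : α ≤ p)
    (hℓ : 1 ≤ ℓ) (hz : 2 * ℓ < ‖z‖) :
    ∫ x in closedBall z ℓ, ‖x‖ ^ (-p) ∂μ
      ≤ finrank ℝ E * μ.real (ball 0 1) * 15 ^ finrank ℝ E / (finrank ℝ E - p)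
          * ℓ ^ ((finrank ℝ E : ℝ) - p + α) * (1 + ‖z‖ ^ 2) ^ (-α / 2) := by
  set d := finrank ℝ E
  set V := μ.real (ball 0 1)
  set s := (d : ℝ) - p with hs_def
  have hs : 0 < s := by linarith
  have hℓ0 : 0 < ℓ := by linarith
  have hz0 : 0 < ‖z‖ := by linarith
  have hbracket := rpow_neg_le_one_add_sq_rpow_neg (t := ‖z‖) (c := 2) (by norm_num) hz0 hα0
    (by nlinarith)
  have hℓd : ℓ ^ d = ℓ ^ (s + α) * ℓ ^ (p - α) := by
    rw [← Real.rpow_add hℓ0, ← Real.rpow_natCast, hs_def]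
    ring_nf
  have hconst : s * (2 ^ p * 2 ^ (α / 2) * V) ≤ d * V * 15 ^ d := by
    have h2 : (2 : ℝ) ^ p * 2 ^ (α / 2) ≤ 15 ^ d := by
      calc (2 : ℝ) ^ p * 2 ^ (α / 2) ≤ 2 ^ d * 2 ^ d := by
            gcongr <;> exact rpow_le_pow_of_exponent_le (by norm_num) (by linarith)
        _ ≤ 15 ^ d := by rw [← mul_pow]; gcongr; norm_num
    calc s * (2 ^ p * 2 ^ (α / 2) * V) ≤ d * (15 ^ d * V) := by
          gcongr
          linarith
      _ = d * V * 15 ^ d := by ring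
  have hbase : (‖z‖ - ℓ) ^ (-p) ≤ (‖z‖ / 2) ^ (-p) :=
    Real.rpow_le_rpow_of_nonpos (by positivity) (by linarith) (by linarith)
  have hℓz : ℓ ^ (p - α) ≤ ‖z‖ ^ (p - α) :=
    Real.rpow_le_rpow hℓ0.le (by linarith) (by linarith)
  calc _ ≤ (‖z‖ - ℓ) ^ (-p) * (ℓ ^ d * V) :=
        setIntegral_closedBall_norm_rpow_neg_le_of_lt_norm μ (by linarith) hℓ0.le (by linarith)
    _ ≤ (‖z‖ / 2) ^ (-p) * (ℓ ^ (s + α) * ‖z‖ ^ (p - α) * V) := by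
      rw [hℓd]
      gcongr
    _ = s * (2 ^ p * 2 ^ (α / 2) * V) / s * ℓ ^ (s + α) * (2 ^ (-α / 2) * ‖z‖ ^ (-α)) := by
      rw [Real.div_rpow hz0.le zero_le_two, Real.rpow_sub hz0, Real.rpow_neg hz0.le p,
        Real.rpow_neg hz0.le α, Real.rpow_neg zero_le_two p, neg_div,
        Real.rpow_neg zero_le_two (α / 2)]
      field_simp
    _ ≤ _ := by gcongr

theorem convolution_near_general (m : ℕ) :
    ∃ C : ℝ, 1 < C ∧ ∀ p α ℓ : ℝ, p ∈ Set.Ioo (0:ℝ) (m:ℝ) → α ∈ Set.Ioo (0:ℝ) p → 1 ≤ ℓ →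
      ∀ z : EuclideanSpace ℝ (Fin m),
        (∫ w in {w : EuclideanSpace ℝ (Fin m) | ‖z - w‖ ≤ ℓ}, ‖w‖ ^ (-p))
          ≤ C / ((m:ℝ) - p) * ℓ ^ ((m:ℝ) - p + α) * (1 + ‖z‖ ^ 2) ^ (-α / 2) := by
  set K := m * volume.real (ball (0 : EuclideanSpace ℝ (Fin m)) 1) * 15 ^ m
  have hK : 0 ≤ K := by positivity
  refine ⟨K + 2, by linarith, ?_⟩
  rintro p α ℓ ⟨hp, hpm⟩ ⟨hα, hαp⟩ hℓ z
  have : Nonempty (Fin m) := Fin.pos_iff_nonempty.1 (by exact_mod_cast hp.trans hpm)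
  have hball : {w | ‖z - w‖ ≤ ℓ} = closedBall z ℓ := by
    ext w; simp [dist_eq_norm, norm_sub_rev]
  have hbound : ∫ w in closedBall z ℓ, ‖w‖ ^ (-p)
      ≤ K / (m - p) * ℓ ^ ((m : ℝ) - p + α) * (1 + ‖z‖ ^ 2) ^ (-α / 2) := by
    rcases le_or_gt ‖z‖ (2 * ℓ) with hz | hz
    · simpa using setIntegral_closedBall_norm_rpow_neg_le_of_norm_le_two_mul volume hp.le
        (by simpa using hpm) hα.le (by rw [finrank_euclideanSpace_fin]; linarith) hℓ hz
    · simpa using setIntegral_closedBall_norm_rpow_neg_le_of_two_mul_lt_norm volume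
        (by simpa using hpm) hα.le hαp.le hℓ hz
  rw [hball]
  refine hbound.trans ?_
  have : 0 < (m : ℝ) - p := by linarith
  gcongr
  linarith

/-- Lemma A.2: convolution bound on the ball of radius `ℓ` around `z`, trading a power
of `ℓ` for decay in the Japanese bracket `⟨z⟩ = (1 + ‖z‖²)^{1/2}`. -/
theorem convolution_near (m : ℕ) (hm : 0 < m) :
    ∃ C : ℝ, 1 < C ∧ ∀ p α ℓ : ℝ, p ∈ Set.Ioo (0:ℝ) (m:ℝ) → α ∈ Set.Ioo (0:ℝ) p → 1 ≤ ℓ →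
      ∀ z : EuclideanSpace ℝ (Fin m),
        (∫ w in {w : EuclideanSpace ℝ (Fin m) | ‖z - w‖ ≤ ℓ}, ‖w‖ ^ (-p))
          ≤ C / ((m:ℝ) - p) * ℓ ^ ((m:ℝ) - p + α) * (1 + ‖z‖ ^ 2) ^ (-α / 2) :=
  convolution_near_general m
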